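/- Let β > 0, E₀ ≥ 0, E_max ≥ 0, let n_τ be a positive even integer with n_τ ≥ 2β(E₀ + E_max), and set ε_τ = β/n_τ. Let E: B → ℝ satisfy |E(k)| ≤ E_max for all k, and define ω̂ = (1/(iε_τ))(e^{iε_τω} − 1) for ω = (π/β)(2n+1) with −n_τ/2 ≤ n < n_τ/2. Then |iω̂ − E(k)| ≤ E₀ implies |ω| ≤ (π/2)E₀ and |E(k)| ≤ 2E₀. -/

import Mathlib

open Complex in
/-- Lemma A1 (first part): for `n_τ ≥ 2β(E₀ + E_max)`, `ε_τ = β/n_τ`, a Matsubara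
frequency `ω = (π/β)(2n+1)` with `−n_τ/2 ≤ n < n_τ/2`, and a dispersion relation `E`
bounded by `E_max`, if `|i ω̂ − E(k)| ≤ E₀` then `|ω| ≤ (π/2)E₀` and `|E(k)| ≤ 2E₀`,
where `ω̂ = (1/(i ε_τ))(e^{i ε_τ ω} − 1)`. -/
theorem matsubara_support_bound
    {B : Type*} (β E₀ Emax : ℝ) (hβ : 0 < β) (hE₀ : 0 ≤ E₀) (hEmax : 0 ≤ Emax)
    (nτ : ℕ) (hpos : 0 < nτ) (heven : Even nτ) (hnτ : 2 * β * (E₀ + Emax) ≤ (nτ : ℝ))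
    (ετ : ℝ) (hετ : ετ = β / nτ)
    (E : B → ℝ) (hEbd : ∀ k, |E k| ≤ Emax)
    (n : ℤ) (hn₁ : -((nτ : ℤ)) ≤ 2 * n) (hn₂ : 2 * n < (nτ : ℤ))
    (ω : ℝ) (hω : ω = Real.pi / β * (2 * n + 1))
    (ωhat : ℂ) (hωhat : ωhat = (1 / (Complex.I * ετ)) * (Complex.exp (Complex.I * ετ * ω) - 1))
    (k : B) (h : ‖Complex.I * ωhat - (E k : ℂ)‖ ≤ E₀) :
    |ω| ≤ Real.pi / 2 * E₀ ∧ |E k| ≤ 2 * E₀ := by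
  have hnpos : (0:ℝ) < nτ := by exact_mod_cast hpos
  have hετpos : 0 < ετ := by rw [hετ]; positivity
  have hετne : ετ ≠ 0 := ne_of_gt hετpos
  have hπ := Real.pi_pos
  set θ : ℝ := ετ * ω with hθdef
  have hiw : Complex.I * (ετ:ℂ) * (ω:ℂ) = (θ : ℂ) * Complex.I := by
    push_cast [hθdef]; ring
  have hIω : Complex.I * ωhat = (Complex.exp ((θ:ℂ) * Complex.I) - 1) / (ετ:ℂ) := by
    rw [hωhat, hiw]
    have : (ετ:ℂ) ≠ 0 := by exact_mod_cast hετne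
    field_simp
  have him0 : (Complex.I * ωhat - (E k : ℂ)).im = Real.sin θ / ετ := by
    rw [Complex.sub_im, hIω, Complex.div_ofReal_im]
    simp [Complex.exp_ofReal_mul_I_im]
  have hre0 : (Complex.I * ωhat - (E k : ℂ)).re = (Real.cos θ - 1)/ετ - E k := by
    rw [Complex.sub_re, hIω, Complex.div_ofReal_re]
    simp [Complex.exp_ofReal_mul_I_re]
  have habs_im : |Real.sin θ / ετ| ≤ E₀ := by
    have := (Complex.abs_im_le_norm (Complex.I * ωhat - (E k : ℂ))).trans h
    rwa [him0] at this
  have habs_re : |(Real.cos θ - 1)/ετ - E k| ≤ E₀ := by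
    have := (Complex.abs_re_le_norm (Complex.I * ωhat - (E k : ℂ))).trans h
    rwa [hre0] at this
  have hsin : |Real.sin θ| ≤ ετ * E₀ := by
    rw [abs_div, abs_of_pos hετpos, div_le_iff₀ hετpos] at habs_im
    linarith
  have hθval : θ = Real.pi * (2 * n + 1) / nτ := by
    rw [hθdef, hω, hετ]; field_simp
  have habs2n : |(2 * (n:ℝ) + 1)| ≤ nτ := by
    rw [abs_le]
    constructor
    · have : -(nτ:ℝ) ≤ 2*(n:ℝ) := by exact_mod_cast hn₁
      linarith
    · have : 2*(n:ℝ) + 1 ≤ nτ := by exact_mod_cast hn₂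
      linarith
  have hθπ : |θ| ≤ Real.pi := by
    rw [hθval, abs_div, abs_mul, abs_of_pos hπ, abs_of_pos hnpos, div_le_iff₀ hnpos]
    nlinarith [habs2n]
  have hinv : 2 * (E₀ + Emax) ≤ 1 / ετ := by
    rw [hετ, one_div_div, le_div_iff₀ hβ]
    linarith
  have hEk := abs_le.1 (hEbd k)
  have hre := abs_le.1 habs_re
  have hθsmall : |θ| ≤ Real.pi / 2 := by
    by_contra hcon
    push_neg at hcon
    have hcos : Real.cos θ ≤ 0 := by
      rw [← Real.cos_abs]
      exact Real.cos_nonpos_of_pi_div_two_le_of_le (le_of_lt hcon) (by linarith)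
    have h3 : (1:ℝ)/ετ ≤ (1 - Real.cos θ)/ετ := by gcongr; linarith
    have h1 : -E₀ ≤ (Real.cos θ - 1)/ετ - E k := hre.1
    have h7 : (Real.cos θ - 1)/ετ = -((1 - Real.cos θ)/ετ) := by ring
    rw [h7] at h1
    have hpos' : 0 < 1/ετ := by positivity
    linarith
  have hjordan := Real.mul_abs_le_abs_sin hθsmall
  have hωθ : |θ| = ετ * |ω| := by
    rw [hθdef, abs_mul, abs_of_pos hετpos]
  have hω_bound : |ω| ≤ Real.pi / 2 * E₀ := by
    have h2π : 2 / Real.pi * |θ| ≤ ετ * E₀ := le_trans hjordan hsin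
    rw [hωθ] at h2π
    have heq : 2 / Real.pi * (ετ * |ω|) = ετ * (2 / Real.pi * |ω|) := by ring
    rw [heq, mul_le_mul_iff_right₀ hετpos, div_mul_eq_mul_div, div_le_iff₀ hπ] at h2π
    linarith
  refine ⟨hω_bound, ?_⟩
  have hcos0 : 0 ≤ Real.cos θ := by
    rw [← Real.cos_abs]
    exact Real.cos_nonneg_of_mem_Icc ⟨by linarith [abs_nonneg θ], hθsmall⟩
  have hsq : (1 - Real.cos θ)^2 ≤ |Real.sin θ|^2 := by
    rw [_root_.sq_abs]
    nlinarith [Real.sin_sq_add_cos_sq θ, Real.cos_le_one θ]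
  have hcs : 1 - Real.cos θ ≤ |Real.sin θ| := le_of_sq_le_sq hsq (abs_nonneg _)
  have h5 : (1 - Real.cos θ)/ετ ≤ E₀ := by
    rw [div_le_iff₀ hετpos]
    linarith [hcs, hsin]
  have h6 : (0:ℝ) ≤ (1 - Real.cos θ)/ετ :=
    div_nonneg (by linarith [Real.cos_le_one θ]) hετpos.le
  have h7 : (Real.cos θ - 1)/ετ = -((1 - Real.cos θ)/ετ) := by ring
  rw [h7] at hre
  rw [abs_le]
  exact ⟨by linarith [hre.1], by linarith [hre.2]⟩
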